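/- arXiv:2311.01345 — 8 statements merged into one kernel-verified Lean document; each statement's English description precedes it below -/
import Mathlib

section
/- Let ϑ̇, λ̇, Q, S, B be real numbers with (ϑ̇, λ̇) ≠ (0, 0) and Q·B > S². If a vector (Qϑ, Sϑ, Bϑ, Qλ, Sλ, Bλ) ∈ ℝ⁶ satisfies M·(Qϑ, Sϑ, Bϑ, Qλ, Sλ, Bλ)ᵀ = 0, where M is the 7×6 real matrix with rows r₁ = (1,0,0,0,1,0), r₂ = (0,1,0,0,0,1), r₃ = (0,−S,Q,0,−B,S), r₄ = (S,−Q,0,B,−S,0), r₅ = (ϑ̇,0,0,λ̇,0,0), r₆ = (0,ϑ̇,0,0,λ̇,0), r₇ = (0,0,ϑ̇,0,0,λ̇), then (Qϑ, Sϑ, Bϑ, Qλ, Sλ, Bλ) = (0,0,0,0,0,0). -/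
/-- Lemma 6.2(b) of the paper: the 7×6 matrix with the stated rows has
trivial kernel whenever (ϑ̇, λ̇) ≠ (0, 0) and Q·B > S². -/
theorem stmt_2 (td ld Q S B : ℝ) (h : (td, ld) ≠ (0, 0)) (hdet : Q * B > S ^ 2)
    (v : Fin 6 → ℝ)
    (M : Matrix (Fin 7) (Fin 6) ℝ)
    (hM : M = !![(1:ℝ), 0, 0, 0, 1, 0;
                 0, 1, 0, 0, 0, 1;
                 0, -S, Q, 0, -B, S;
                 S, -Q, 0, B, -S, 0;
                 td, 0, 0, ld, 0, 0;
                 0, td, 0, 0, ld, 0;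
                 0, 0, td, 0, 0, ld])
    (hv : M.mulVec v = 0) :
    v = 0 := by
  subst hM
  have c0 := congrFun hv 0
  have c1 := congrFun hv 1
  have c2 := congrFun hv 2
  have c3 := congrFun hv 3
  have c4 := congrFun hv 4
  have c5 := congrFun hv 5
  have c6 := congrFun hv 6
  simp [Matrix.mulVec, dotProduct, Fin.sum_univ_six,
    show ((5:Fin 6)) = Fin.succ 4 from rfl,
    show ((5:Fin 7)) = Fin.succ 4 from rfl,
    show ((6:Fin 7)) = Fin.succ (Fin.succ 4) from rfl] at c0 c1 c2 c3 c4 c5 c6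
  have e0 : v 0 + v 4 = 0 := by linear_combination c0
  have e1 : v 1 + v 5 = 0 := by linear_combination c1
  have e2 : -(S * v 1) + Q * v 2 - B * v 4 + S * v 5 = 0 := by linear_combination c2
  have e3 : S * v 0 - Q * v 1 + B * v 3 - S * v 4 = 0 := by linear_combination c3
  have e4 : td * v 0 + ld * v 3 = 0 := by linear_combination c4
  have e5 : td * v 1 + ld * v 4 = 0 := by linear_combination c5
  have e6 : td * v 2 + ld * v 5 = 0 := by linear_combination c6
  clear hv c0 c1 c2 c3 c4 c5 c6
  have h' : ¬ (td = 0 ∧ ld = 0) := by simpa [Prod.ext_iff] using h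
  have hK : B * td ^ 2 - 2 * S * td * ld + Q * ld ^ 2 ≠ 0 := by
    intro hk
    rcases not_and_or.mp h' with htd | hld
    · have h1 : (Q * ld - S * td) ^ 2 + (Q * B - S ^ 2) * td ^ 2 = 0 := by
        linear_combination Q * hk
      have h2 : td ^ 2 = 0 := by nlinarith [sq_nonneg (Q * ld - S * td), sq_nonneg td]
      exact htd (by simpa using h2)
    · have h1 : (B * td - S * ld) ^ 2 + (Q * B - S ^ 2) * ld ^ 2 = 0 := by
        linear_combination B * hk
      have h2 : ld ^ 2 = 0 := by nlinarith [sq_nonneg (B * td - S * ld), sq_nonneg ld]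
      exact hld (by simpa using h2)
  have hB : B ≠ 0 := by intro hB; rw [hB] at hdet; nlinarith [sq_nonneg S]
  -- derived relations: td * v1 = ld * v0, td * v2 = ld * v1, E := B v0 - 2S v1 + Q v2 = 0
  have r1 : td * v 1 - ld * v 0 = 0 := by linear_combination e5 - ld * e0
  have r2 : td * v 2 - ld * v 1 = 0 := by linear_combination e6 - ld * e1
  have rE : B * v 0 - 2 * S * v 1 + Q * v 2 = 0 := by
    linear_combination e2 + B * e0 - S * e1
  have ha : v 0 = 0 := by
    have : (B * td ^ 2 - 2 * S * td * ld + Q * ld ^ 2) * v 0 = 0 := by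
      linear_combination td ^ 2 * rE + (2 * S * td - Q * ld) * r1 - Q * td * r2
    exact (mul_eq_zero.mp this).resolve_left hK
  have hb : v 1 = 0 := by
    have : (B * td ^ 2 - 2 * S * td * ld + Q * ld ^ 2) * v 1 = 0 := by
      linear_combination td * ld * rE + B * td * r1 - Q * ld * r2
    exact (mul_eq_zero.mp this).resolve_left hK
  have hc : v 2 = 0 := by
    have : (B * td ^ 2 - 2 * S * td * ld + Q * ld ^ 2) * v 2 = 0 := by
      linear_combination ld ^ 2 * rE + B * ld * r1 + (B * td - 2 * S * ld) * r2
    exact (mul_eq_zero.mp this).resolve_left hK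
  have he : v 4 = 0 := by linear_combination e0 - ha
  have hf : v 5 = 0 := by linear_combination e1 - hb
  have hd : v 3 = 0 := by
    have : B * v 3 = 0 := by linear_combination e3 - S * ha + Q * hb + S * he
    exact (mul_eq_zero.mp this).resolve_left hB
  funext i
  fin_cases i <;> simp [ha, hb, hc, hd, he, hf]
end

section
/- Let Q, S, B be real numbers with Q·B > S². Then the four vectors r₁ = (1,0,0,0,1,0), r₂ = (0,1,0,0,0,1), r₃ = (0,−S,Q,0,−B,S), r₄ = (S,−Q,0,B,−S,0) in ℝ⁶ are linearly independent. -/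
/-- Lemma 6.2(c) of the paper: the first four rows of the 7×6 matrix of
Lemma 6.2(b) are linearly independent whenever Q·B > S². -/
theorem stmt_3 (Q S B : ℝ) (hdet : Q * B > S ^ 2) :
    LinearIndependent ℝ
      ![(![(1:ℝ), 0, 0, 0, 1, 0] : Fin 6 → ℝ),
        ![0, 1, 0, 0, 0, 1],
        ![0, -S, Q, 0, -B, S],
        ![S, -Q, 0, B, -S, 0]] := by
  have hQB : Q * B > 0 := lt_of_le_of_lt (sq_nonneg S) hdet
  have hQ : Q ≠ 0 := fun h => by simp [h] at hQB
  have hB : B ≠ 0 := fun h => by simp [h] at hQB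
  rw [Fintype.linearIndependent_iff]
  intro g hg
  have h2 := congrFun hg 2
  have h3 := congrFun hg 3
  simp [Fin.sum_univ_four] at h2 h3
  have hg2 : g 2 = 0 := by
    rcases h2 with h | h
    · exact h
    · exact absurd h hQ
  have hg3 : g 3 = 0 := by
    rcases h3 with h | h
    · exact h
    · exact absurd h hB
  have h0 := congrFun hg 0
  have h1 := congrFun hg 1
  simp [Fin.sum_univ_four, hg2, hg3] at h0 h1
  intro i
  fin_cases i <;> assumption
end

section
/- Let Q, S, B, G, α, F, a, f be real numbers with Q·B > S². Then the set 𝒜 of all vectors (Qϑ, Sϑ, Bϑ, Gϑ, Qλ, Sλ, Bλ, Gλ) ∈ ℝ⁸ satisfying (a) Qϑ + Sλ = Q·α + F, (b) Sϑ + Bλ = S·α + G, (c) Q·Bϑ + S·Bλ − S·Sϑ − B·Sλ = 0, (d) S·Qϑ + B·Qλ − Q·Sϑ − S·Sλ = 0, (e) Gϑ = −S·a, (f) Gλ = Q·a + f, is a nonempty affine subspace of ℝ⁸ of dimension 2. -/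
/-- Part of Theorem 6.3 of the paper: the solution set 𝒜 ⊆ ℝ⁸ of the
pointwise system (foe) is a nonempty affine subspace of dimension 2.
Coordinates: (v 0, ..., v 7) = (Qϑ, Sϑ, Bϑ, Gϑ, Qλ, Sλ, Bλ, Gλ);
`a` and `f` play the role of α′ and F′. -/
theorem stmt_4 (Q S B G α F a f : ℝ) (hdet : Q * B > S ^ 2) :
    ∃ 𝒜 : AffineSubspace ℝ (Fin 8 → ℝ),
      (𝒜 : Set (Fin 8 → ℝ)) =
        {v : Fin 8 → ℝ |
          v 0 + v 5 = Q * α + F ∧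
          v 1 + v 6 = S * α + G ∧
          Q * v 2 + S * v 6 - S * v 1 - B * v 5 = 0 ∧
          S * v 0 + B * v 4 - Q * v 1 - S * v 5 = 0 ∧
          v 3 = -S * a ∧
          v 7 = Q * a + f} ∧
      (𝒜 : Set (Fin 8 → ℝ)).Nonempty ∧
      Module.finrank ℝ 𝒜.direction = 2 := by
  have hQB : Q * B > 0 := lt_of_le_of_lt (sq_nonneg S) hdet
  have hQ : Q ≠ 0 := fun h => by rw [h] at hQB; simp at hQB
  have hB : B ≠ 0 := fun h => by rw [h] at hQB; simp at hQB
  set p₀ : Fin 8 → ℝ :=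
    ![Q*α+F, 0, -S*(S*α+G)/Q, -S*a, -S*(Q*α+F)/B, 0, S*α+G, Q*a+f] with hp₀
  set d1 : Fin 8 → ℝ := ![0, 1, 2*S/Q, 0, Q/B, 0, -1, 0] with hd1
  set d2 : Fin 8 → ℝ := ![-1, 0, B/Q, 0, 2*S/B, 1, 0, 0] with hd2
  refine ⟨AffineSubspace.mk' p₀ (Submodule.span ℝ {d1, d2}), ?_, ?_, ?_⟩
  · ext v
    rw [SetLike.mem_coe, AffineSubspace.mem_mk', Submodule.mem_span_pair]
    constructor
    · rintro ⟨c1, c2, hc⟩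
      have h : ∀ i, v i = p₀ i + c1 * d1 i + c2 * d2 i := by
        intro i
        have := congrFun hc i
        simp only [vsub_eq_sub, Pi.add_apply, Pi.smul_apply, Pi.sub_apply,
          smul_eq_mul] at this
        linarith
      have h0 : v 0 = (Q*α+F) + c1 * 0 + c2 * (-1) := h 0
      have h1 : v 1 = 0 + c1 * 1 + c2 * 0 := h 1
      have h2 : v 2 = -S*(S*α+G)/Q + c1 * (2*S/Q) + c2 * (B/Q) := h 2
      have h3 : v 3 = -S*a + c1 * 0 + c2 * 0 := h 3
      have h4 : v 4 = -S*(Q*α+F)/B + c1 * (Q/B) + c2 * (2*S/B) := h 4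
      have h5 : v 5 = 0 + c1 * 0 + c2 * 1 := h 5
      have h6 : v 6 = (S*α+G) + c1 * (-1) + c2 * 0 := h 6
      have h7 : v 7 = (Q*a+f) + c1 * 0 + c2 * 0 := h 7
      refine ⟨by linarith, by linarith, ?_, ?_, by linarith, by linarith⟩
      · rw [h1, h2, h5, h6]
        field_simp
        ring
      · rw [h0, h1, h4, h5]
        field_simp
        ring
    · rintro ⟨ha, hb, hc, hd, he, hf⟩
      refine ⟨v 1, v 5, funext fun i => ?_⟩
      have hb' : S * (v 1 + v 6) = S * (S*α+G) := by rw [hb]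
      have ha' : S * (v 0 + v 5) = S * (Q*α+F) := by rw [ha]
      fin_cases i
      · show v 1 * 0 + v 5 * (-1) = v 0 - (Q*α+F); linarith
      · show v 1 * 1 + v 5 * 0 = v 1 - 0; ring
      · show v 1 * (2*S/Q) + v 5 * (B/Q) = v 2 - (-S*(S*α+G)/Q)
        field_simp
        linarith [hc, hb']
      · show v 1 * 0 + v 5 * 0 = v 3 - (-S*a); rw [he]; ring
      · show v 1 * (Q/B) + v 5 * (2*S/B) = v 4 - (-S*(Q*α+F)/B)
        field_simp
        linarith [hd, ha']
      · show v 1 * 0 + v 5 * 1 = v 5 - 0; ring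
      · show v 1 * (-1) + v 5 * 0 = v 6 - (S*α+G); linarith
      · show v 1 * 0 + v 5 * 0 = v 7 - (Q*a+f); linarith
  · exact ⟨p₀, AffineSubspace.self_mem_mk' _ _⟩
  · rw [AffineSubspace.direction_mk']
    have hrange : Set.range ![d1, d2] = {d1, d2} := by
      simp only [Matrix.range_cons, Matrix.range_empty, Set.union_empty,
        Set.union_singleton]
      exact Set.pair_comm d2 d1
    rw [← hrange, finrank_span_eq_card]
    · simp
    · rw [LinearIndependent.pair_iff]
      intro s t hst
      have h1' := congrFun hst 1
      have h5' := congrFun hst 5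
      have e1 : s * (1:ℝ) + t * 0 = 0 := h1'
      have e5 : s * (0:ℝ) + t * 1 = 0 := h5'
      constructor <;> linarith
end

section
/- Let ϑ̇, λ̇, Q, S, B, G, α, F, a, f be real numbers with (ϑ̇, λ̇) ≠ (0, 0) and Q·B > S². Let 𝒜 ⊆ ℝ⁸ be the set of all (Qϑ, Sϑ, Bϑ, Gϑ, Qλ, Sλ, Bλ, Gλ) satisfying Qϑ + Sλ = Q·α + F, Sϑ + Bλ = S·α + G, Q·Bϑ + S·Bλ − S·Sϑ − B·Sλ = 0, S·Qϑ + B·Qλ − Q·Sϑ − S·Sλ = 0, Gϑ = −S·a, Gλ = Q·a + f, and let ℒ ⊆ ℝ⁴ be the set of all (Q̇, Ṡ, Ḃ, Ġ) satisfying Ġ = −S·a·ϑ̇ + (Q·a + f)·λ̇ and Q·Ḃ + B·Q̇ − 2S·Ṡ = ((Q·B − S²)·α + B·F − S·G)·ϑ̇ + (Q·G − S·F)·λ̇. Then the linear map Φ : ℝ⁸ → ℝ⁴ sending (Qϑ, Sϑ, Bϑ, Gϑ, Qλ, Sλ, Bλ, Gλ) to (Qϑ·ϑ̇ + Qλ·λ̇,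 Sϑ·ϑ̇ + Sλ·λ̇, Bϑ·ϑ̇ + Bλ·λ̇, Gϑ·ϑ̇ + Gλ·λ̇) maps 𝒜 bijectively onto ℒ. -/
/-!
On `𝒜` the coordinates `Sϑ, Sλ` are free: the equations of (foe) determine the other six from
them (this needs `Q, B ≠ 0`). Likewise a point of `ℒ` is determined by `Ṡ, Ḃ` (using `B ≠ 0`).
In these coordinates `Φ` is affine with linear part of determinant `B ϑ̇² - 2 S ϑ̇ λ̇ + Q λ̇²`,
a definite quadratic form since `Q B > S²`; so it does not vanish for `(ϑ̇, λ̇) ≠ 0`, and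
Cramer's rule gives bijectivity.
-/

open Set

theorem eq_zero_of_det_ne_zero {K : Type*} [Field K] {a b c d s t : K}
    (hdet : a * d - b * c ≠ 0) (h₁ : a * s + b * t = 0) (h₂ : c * s + d * t = 0) :
    s = 0 ∧ t = 0 := by
  have hs : (a * d - b * c) * s = 0 := by linear_combination d * h₁ - b * h₂
  have ht : (a * d - b * c) * t = 0 := by linear_combination a * h₂ - c * h₁
  exact ⟨(mul_eq_zero.mp hs).resolve_left hdet, (mul_eq_zero.mp ht).resolve_left hdet⟩

theorem exists_solution_of_det_ne_zero {K : Type*} [Field K] {a b c d : K}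
    (hdet : a * d - b * c ≠ 0) (p q : K) : ∃ s t, a * s + b * t = p ∧ c * s + d * t = q :=
  ⟨(d * p - b * q) / (a * d - b * c), (a * q - c * p) / (a * d - b * c), by
    constructor <;> rw [mul_div_assoc', mul_div_assoc', ← add_div, div_eq_iff hdet] <;> ring⟩

theorem quadratic_form_ne_zero {Q S B x y : ℝ} (hdet : Q * B > S ^ 2) (hxy : (x, y) ≠ (0, 0)) :
    B * x ^ 2 - 2 * S * x * y + Q * y ^ 2 ≠ 0 := by
  intro h
  have hpos : 0 < Q * B - S ^ 2 := sub_pos.2 hdet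
  have hx : (Q * B - S ^ 2) * x ^ 2 = 0 := by
    have : (Q * y - S * x) ^ 2 + (Q * B - S ^ 2) * x ^ 2 = 0 := by linear_combination Q * h
    linarith [sq_nonneg (Q * y - S * x), mul_nonneg hpos.le (sq_nonneg x)]
  have hy : (Q * B - S ^ 2) * y ^ 2 = 0 := by
    have : (B * x - S * y) ^ 2 + (Q * B - S ^ 2) * y ^ 2 = 0 := by linear_combination B * h
    linarith [sq_nonneg (B * x - S * y), mul_nonneg hpos.le (sq_nonneg y)]
  simp only [mul_eq_zero, hpos.ne', false_or, pow_eq_zero_iff two_ne_zero] at hx hy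
  exact hxy (by rw [hx, hy])

section

variable (td ld Q S B G α F a f : ℝ)

-- Coordinates `(Qϑ, Sϑ, Bϑ, Gϑ, Qλ, Sλ, Bλ, Gλ)` on `𝒜` and `(Q̇, Ṡ, Ḃ, Ġ)` on `ℒ`;
-- `a` and `f` stand for `α′` and `F′`.
def foeSolutions : Set (Fin 8 → ℝ) :=
  {v | v 0 + v 5 = Q * α + F ∧
    v 1 + v 6 = S * α + G ∧
    Q * v 2 + S * v 6 - S * v 1 - B * v 5 = 0 ∧
    S * v 0 + B * v 4 - Q * v 1 - S * v 5 = 0 ∧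
    v 3 = -S * a ∧
    v 7 = Q * a + f}

def dgeSolutions : Set (Fin 4 → ℝ) :=
  {w | w 3 = -S * a * td + (Q * a + f) * ld ∧
    Q * w 2 + B * w 0 - 2 * S * w 1 =
      ((Q * B - S ^ 2) * α + B * F - S * G) * td + (Q * G - S * F) * ld}

def dirDeriv (v : Fin 8 → ℝ) : Fin 4 → ℝ :=
  ![v 0 * td + v 4 * ld, v 1 * td + v 5 * ld, v 2 * td + v 6 * ld, v 3 * td + v 7 * ld]

variable {td ld Q S B G α F a f}

theorem mapsTo_dirDeriv :
    MapsTo (dirDeriv td ld) (foeSolutions Q S B G α F a f)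
      (dgeSolutions td ld Q S B G α F a f) := by
  rintro v ⟨h₁, h₂, h₃, h₄, h₅, h₆⟩
  refine ⟨?_, ?_⟩
  · change v 3 * td + v 7 * ld = _
    rw [h₅, h₆]
  · change Q * (v 2 * td + v 6 * ld) + B * (v 0 * td + v 4 * ld)
      - 2 * S * (v 1 * td + v 5 * ld) = _
    linear_combination td * h₃ + ld * h₄ + (B * td - S * ld) * h₁ + (Q * ld - S * td) * h₂

theorem mul_dirDeriv_two (td ld : ℝ) {v : Fin 8 → ℝ}
    (hv : v ∈ foeSolutions Q S B G α F a f) :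
    Q * dirDeriv td ld v 2 =
      (2 * S * td - Q * ld) * v 1 + B * td * v 5 + (Q * ld - S * td) * (S * α + G) := by
  obtain ⟨-, h₂, h₃, -⟩ := hv
  change Q * (v 2 * td + v 6 * ld) = _
  linear_combination td * h₃ + (Q * ld - S * td) * h₂

theorem foeSolutions.ext (hQ : Q ≠ 0) (hB : B ≠ 0) {v v' : Fin 8 → ℝ}
    (hv : v ∈ foeSolutions Q S B G α F a f)
    (hv' : v' ∈ foeSolutions Q S B G α F a f)
    (h₁ : v 1 = v' 1) (h₅ : v 5 = v' 5) : v = v' := by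
  obtain ⟨e₁, e₂, e₃, e₄, e₅, e₆⟩ := hv
  obtain ⟨e₁', e₂', e₃', e₄', e₅', e₆'⟩ := hv'
  funext i
  fin_cases i <;> simp only [Fin.reduceFinMk, Fin.isValue]
  · linear_combination e₁ - e₁' - h₅
  · exact h₁
  · exact mul_left_cancel₀ hQ <| by
      linear_combination e₃ - e₃' - S * (e₂ - e₂') + 2 * S * h₁ + B * h₅
  · exact e₅.trans e₅'.symm
  · exact mul_left_cancel₀ hB <| by
      linear_combination e₄ - e₄' - S * (e₁ - e₁') + Q * h₁ + 2 * S * h₅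
  · exact h₅
  · linear_combination e₂ - e₂' - h₁
  · exact e₆.trans e₆'.symm

theorem exists_mem_foeSolutions (hQ : Q ≠ 0) (hB : B ≠ 0) (s t : ℝ) :
    ∃ v ∈ foeSolutions Q S B G α F a f, v 1 = s ∧ v 5 = t := by
  refine ⟨![Q * α + F - t, s, (2 * S * s + B * t - S * (S * α + G)) / Q, -S * a,
    (Q * s + 2 * S * t - S * (Q * α + F)) / B, t, S * α + G - s, Q * a + f],
    ⟨?_, ?_, ?_, ?_, rfl, rfl⟩, rfl, rfl⟩ <;>
    simp only [Matrix.cons_val] <;> field_simp <;> ring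

theorem dgeSolutions.ext (hB : B ≠ 0) {w w' : Fin 4 → ℝ}
    (hw : w ∈ dgeSolutions td ld Q S B G α F a f)
    (hw' : w' ∈ dgeSolutions td ld Q S B G α F a f)
    (h₁ : w 1 = w' 1) (h₂ : w 2 = w' 2) : w = w' := by
  obtain ⟨e₃, e⟩ := hw
  obtain ⟨e₃', e'⟩ := hw'
  funext i
  fin_cases i <;> simp only [Fin.reduceFinMk, Fin.isValue]
  · exact mul_left_cancel₀ hB (by linear_combination e - e' - Q * h₂ + 2 * S * h₁)
  · exact h₁
  · exact h₂
  · exact e₃.trans e₃'.symm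

theorem injOn_dirDeriv (hQ : Q ≠ 0) (hB : B ≠ 0)
    (hD : B * td ^ 2 - 2 * S * td * ld + Q * ld ^ 2 ≠ 0) :
    InjOn (dirDeriv td ld) (foeSolutions Q S B G α F a f) := by
  intro v hv v' hv' h
  have e₁ : v 1 * td + v 5 * ld = v' 1 * td + v' 5 * ld := congrFun h 1
  have e₂ := congrArg (Q * · 2) h
  rw [mul_dirDeriv_two td ld hv, mul_dirDeriv_two td ld hv'] at e₂
  obtain ⟨h₁, h₅⟩ := eq_zero_of_det_ne_zero (a := td) (b := ld) (c := 2 * S * td - Q * ld)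
    (d := B * td) (s := v 1 - v' 1) (t := v 5 - v' 5) (fun h => hD (by linear_combination h))
    (by linear_combination e₁) (by linear_combination e₂)
  exact foeSolutions.ext hQ hB hv hv' (sub_eq_zero.mp h₁) (sub_eq_zero.mp h₅)

theorem surjOn_dirDeriv (hQ : Q ≠ 0) (hB : B ≠ 0)
    (hD : B * td ^ 2 - 2 * S * td * ld + Q * ld ^ 2 ≠ 0) :
    SurjOn (dirDeriv td ld) (foeSolutions Q S B G α F a f)
      (dgeSolutions td ld Q S B G α F a f) := by
  intro w hw
  obtain ⟨s, t, h₁, h₂⟩ := exists_solution_of_det_ne_zero (a := td) (b := ld)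
    (c := 2 * S * td - Q * ld) (d := B * td) (fun h => hD (by linear_combination h))
    (w 1) (Q * w 2 - (Q * ld - S * td) * (S * α + G))
  obtain ⟨v, hv, rfl, rfl⟩ : ∃ v ∈ foeSolutions Q S B G α F a f, v 1 = s ∧ v 5 = t :=
    exists_mem_foeSolutions hQ hB s t
  refine ⟨v, hv, dgeSolutions.ext hB (mapsTo_dirDeriv hv) hw ?_ ?_⟩
  · change v 1 * td + v 5 * ld = w 1
    linear_combination h₁
  · exact mul_left_cancel₀ hQ (by linear_combination mul_dirDeriv_two td ld hv + h₂)

end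

/-- Main assertion of Theorem 6.3 of the paper: the directional-derivative
map Φ maps the affine solution space 𝒜 of the pointwise system (foe)
bijectively onto the affine space ℒ defined by the equations (dge).
Coordinates of v : Fin 8 → ℝ: (Qϑ, Sϑ, Bϑ, Gϑ, Qλ, Sλ, Bλ, Gλ);
`a` and `f` play the role of α′ and F′. -/
theorem stmt_6 (td ld Q S B G α F a f : ℝ)
    (h : (td, ld) ≠ (0, 0)) (hdet : Q * B > S ^ 2) :
    Set.BijOn
      (fun v : Fin 8 → ℝ =>
        (![v 0 * td + v 4 * ld, v 1 * td + v 5 * ld,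
           v 2 * td + v 6 * ld, v 3 * td + v 7 * ld] : Fin 4 → ℝ))
      {v : Fin 8 → ℝ |
        v 0 + v 5 = Q * α + F ∧
        v 1 + v 6 = S * α + G ∧
        Q * v 2 + S * v 6 - S * v 1 - B * v 5 = 0 ∧
        S * v 0 + B * v 4 - Q * v 1 - S * v 5 = 0 ∧
        v 3 = -S * a ∧
        v 7 = Q * a + f}
      {w : Fin 4 → ℝ |
        w 3 = -S * a * td + (Q * a + f) * ld ∧
        Q * w 2 + B * w 0 - 2 * S * w 1 =
          ((Q * B - S ^ 2) * α + B * F - S * G) * td + (Q * G - S * F) * ld} := by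
  have hQB : 0 < Q * B := (sq_nonneg S).trans_lt hdet
  have hQ : Q ≠ 0 := left_ne_zero_of_mul hQB.ne'
  have hB : B ≠ 0 := right_ne_zero_of_mul hQB.ne'
  have hD := quadratic_form_ne_zero hdet h
  exact ⟨mapsTo_dirDeriv, injOn_dirDeriv hQ hB hD, surjOn_dirDeriv hQ hB hD⟩
end

section
/- Let I ⊆ ℝ be a nonempty open interval, let ε, θ, κ ∈ ℝ, and let α : I → ℝ be a differentiable function with 2α′(ϑ) + α(ϑ)² = 4ε for all ϑ ∈ I. Define F : I → ℝ by F(ϑ) = (θ·(2 − ϑ·α(ϑ)) + 4εκ·α(ϑ))/(4ε) if ε ≠ 0, and, assuming additionally that α is nowhere zero, by F(ϑ) = κ·α(ϑ) − 2θ/(3·α(ϑ)²) if ε = 0. Then F is twice differentiable on I and F″(ϑ) = −F(ϑ)·α′(ϑ) for all ϑ ∈ I. -/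
/-- Second identity of equation (adp) of the paper: the function F,
characterized by 4εF = θ(2 − ϑα) + 4εκα when ε ≠ 0 and by
F = κα − 2θ/(3α²) when ε = 0 (with α nowhere zero in the latter case),
is twice differentiable and satisfies F″ = −F·α′ whenever α satisfies
2α′ + α² = 4ε on the nonempty open interval I. -/
theorem stmt_12 (I : Set ℝ) (hI : IsOpen I) (hne : I.Nonempty) (hconv : Convex ℝ I)
    (ε θ κ : ℝ) (α : ℝ → ℝ)
    (hα : ∀ ϑ ∈ I, DifferentiableAt ℝ α ϑ)
    (hode : ∀ ϑ ∈ I, 2 * deriv α ϑ + (α ϑ) ^ 2 = 4 * ε)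
    (hα0 : ε = 0 → ∀ ϑ ∈ I, α ϑ ≠ 0)
    (F : ℝ → ℝ)
    (hF : F = fun ϑ =>
      if ε = 0 then κ * α ϑ - 2 * θ / (3 * (α ϑ) ^ 2)
      else (θ * (2 - ϑ * α ϑ) + 4 * ε * κ * α ϑ) / (4 * ε)) :
    ∀ ϑ ∈ I, DifferentiableAt ℝ F ϑ ∧ DifferentiableAt ℝ (deriv F) ϑ ∧
      deriv (deriv F) ϑ = -(F ϑ) * deriv α ϑ := by
  intro ϑ hϑ
  have ha : ∀ x ∈ I, HasDerivAt α (2 * ε - (α x) ^ 2 / 2) x := by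
    intro x hx
    have h := (hα x hx).hasDerivAt
    have he : deriv α x = 2 * ε - (α x) ^ 2 / 2 := by
      have := hode x hx; linarith
    rwa [he] at h
  have hdα : deriv α ϑ = 2 * ε - (α ϑ) ^ 2 / 2 := (ha ϑ hϑ).deriv
  by_cases hε : ε = 0
  · subst hε
    have hz : ∀ x ∈ I, α x ≠ 0 := hα0 rfl
    have hF' : F = fun x => κ * α x - 2 * θ / (3 * (α x) ^ 2) := by
      rw [hF]; simp
    have hFd : ∀ x ∈ I,
        HasDerivAt F (κ * (2 * 0 - (α x) ^ 2 / 2) -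
          (0 * (3 * (α x) ^ 2) - 2 * θ * (3 * ((2 : ℕ) * α x ^ (2 - 1) * (2 * 0 - (α x) ^ 2 / 2)))) /
            (3 * (α x) ^ 2) ^ 2) x := by
      intro x hx
      have hne2 : 3 * (α x) ^ 2 ≠ 0 :=
        mul_ne_zero three_ne_zero (pow_ne_zero 2 (hz x hx))
      have h1 := (ha x hx).const_mul κ
      have h2 := ((ha x hx).pow 2).const_mul 3
      have h3 := (hasDerivAt_const x (2 * θ)).div h2 hne2
      have h := h1.sub h3
      rw [hF']
      exact h
    -- first derivative as a nice function G
    have hFdG : ∀ x ∈ I, HasDerivAt F (-(κ * (α x) ^ 2) / 2 - 2 * θ / (3 * α x)) x := by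
      intro x hx
      have := hFd x hx
      convert this using 1
      have hx0 := hz x hx
      field_simp
      ring
    set G : ℝ → ℝ := fun x => -(κ * (α x) ^ 2) / 2 - 2 * θ / (3 * α x) with hG
    have hdF : DifferentiableAt ℝ F ϑ := (hFdG ϑ hϑ).differentiableAt
    have heq : deriv F =ᶠ[nhds ϑ] G :=
      Filter.eventuallyEq_of_mem (hI.mem_nhds hϑ) fun x hx => (hFdG x hx).deriv
    have hne3 : 3 * α ϑ ≠ 0 := mul_ne_zero three_ne_zero (hz ϑ hϑ)
    have hGd : HasDerivAt G
        ((-(κ * ((2 : ℕ) * α ϑ ^ (2 - 1) * (2 * 0 - (α ϑ) ^ 2 / 2)))) / 2 -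
          (0 * (3 * α ϑ) - 2 * θ * (3 * (2 * 0 - (α ϑ) ^ 2 / 2))) / (3 * α ϑ) ^ 2) ϑ := by
      have h1 := ((((ha ϑ hϑ).pow 2).const_mul κ).neg).div_const 2
      have h2 := (hasDerivAt_const ϑ (2 * θ)).div ((ha ϑ hϑ).const_mul 3) hne3
      exact h1.sub h2
    have hdG : DifferentiableAt ℝ (deriv F) ϑ :=
      hGd.differentiableAt.congr_of_eventuallyEq heq
    refine ⟨hdF, hdG, ?_⟩
    rw [heq.deriv_eq, hGd.deriv, hdα, hF']
    have hϑ0 := hz ϑ hϑ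
    field_simp
    ring
  · have hF' : F = fun x => (θ * (2 - x * α x) + 4 * ε * κ * α x) / (4 * ε) := by
      rw [hF]; simp [hε]
    have hFdG : ∀ x ∈ I, HasDerivAt F
        ((θ * (0 - (1 * α x + x * (2 * ε - (α x) ^ 2 / 2))) +
          4 * ε * κ * (2 * ε - (α x) ^ 2 / 2)) / (4 * ε)) x := by
      intro x hx
      have h1 := (hasDerivAt_id x).mul (ha x hx)
      have h2 := (hasDerivAt_const x (2 : ℝ)).sub h1
      have h3 := h2.const_mul θ
      have h4 := (ha x hx).const_mul (4 * ε * κ)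
      have h5 := (h3.add h4).div_const (4 * ε)
      rw [hF']
      exact h5
    set G : ℝ → ℝ := fun x =>
      (θ * (0 - (1 * α x + x * (2 * ε - (α x) ^ 2 / 2))) +
        4 * ε * κ * (2 * ε - (α x) ^ 2 / 2)) / (4 * ε) with hG
    have hdF : DifferentiableAt ℝ F ϑ := (hFdG ϑ hϑ).differentiableAt
    have heq : deriv F =ᶠ[nhds ϑ] G :=
      Filter.eventuallyEq_of_mem (hI.mem_nhds hϑ) fun x hx => (hFdG x hx).deriv
    have hd : HasDerivAt (fun y => 2 * ε - (α y) ^ 2 / 2)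
        (0 - (2 : ℕ) * α ϑ ^ (2 - 1) * (2 * ε - (α ϑ) ^ 2 / 2) / 2) ϑ :=
      (hasDerivAt_const ϑ (2 * ε)).sub (((ha ϑ hϑ).pow 2).div_const 2)
    have hGd : HasDerivAt G
        ((θ * (0 - (1 * (2 * ε - (α ϑ) ^ 2 / 2) +
            (1 * (2 * ε - (α ϑ) ^ 2 / 2) +
              ϑ * (0 - (2 : ℕ) * α ϑ ^ (2 - 1) * (2 * ε - (α ϑ) ^ 2 / 2) / 2)))) +
          4 * ε * κ * (0 - (2 : ℕ) * α ϑ ^ (2 - 1) * (2 * ε - (α ϑ) ^ 2 / 2) / 2)) / (4 * ε)) ϑ := by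
      have hs : HasDerivAt (fun y => (0:ℝ) - (1 * α y + y * (2 * ε - (α y) ^ 2 / 2)))
          (0 - (1 * (2 * ε - (α ϑ) ^ 2 / 2) +
            (1 * (2 * ε - (α ϑ) ^ 2 / 2) + ϑ * (0 - (2 : ℕ) * α ϑ ^ (2 - 1) * (2 * ε - (α ϑ) ^ 2 / 2) / 2)))) ϑ :=
        (hasDerivAt_const ϑ (0:ℝ)).sub (((ha ϑ hϑ).const_mul 1).add ((hasDerivAt_id ϑ).mul hd))
      exact ((hs.const_mul θ).add (hd.const_mul (4 * ε * κ))).div_const (4 * ε)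
    have hdG : DifferentiableAt ℝ (deriv F) ϑ :=
      hGd.differentiableAt.congr_of_eventuallyEq heq
    refine ⟨hdF, hdG, ?_⟩
    rw [heq.deriv_eq, hGd.deriv, hdα, hF']
    field_simp
    ring
end

section
/- Let U ⊆ ℝ² be open, let Q, S, B : U → ℝ be differentiable functions with D := Q·B − S² nowhere zero on U, and suppose that S·Q_ϑ + B·Q_λ = Q·S_ϑ + S·S_λ and S·S_ϑ + B·S_λ = Q·B_ϑ + S·B_λ hold at every point of U, where f_ϑ and f_λ denote the partial derivatives of f with respect to the first and second coordinate. Then (B/D)_λ + (S/D)_ϑ = 0 and (S/D)_λ + (Q/D)_ϑ = 0 at every point of U; that is, the 1-forms D⁻¹(B dϑ − S dλ) and D⁻¹(S dϑ − Q dλ) are closed. -/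
/-!
By the quotient rule, `(B/D)_λ + (S/D)_ϑ` is `((B_λ + S_ϑ) D - B D_λ - S D_ϑ) / D²`. Substituting
`D_v = B Q_v + Q B_v - 2 S S_v`, the numerator becomes `S · (eqv2) - B · (eqv1)`, each equation
read as its left side minus its right side. Likewise the numerator of `(S/D)_λ + (Q/D)_ϑ` is
`Q · (eqv2) - S · (eqv1)`.
-/

section

variable {𝕜 E : Type*} [NontriviallyNormedField 𝕜] [NormedAddCommGroup E] [NormedSpace 𝕜 E]
  {f g h : E → 𝕜} {x : E}

theorem fderiv_div_apply (hf : DifferentiableAt 𝕜 f x) (hg : DifferentiableAt 𝕜 g x)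
    (hx : g x ≠ 0) (v : E) :
    fderiv 𝕜 (fun y => f y / g y) x v =
      (fderiv 𝕜 f x v * g x - f x * fderiv 𝕜 g x v) / g x ^ 2 := by
  have hinv : HasFDerivAt (fun y => (g y)⁻¹) _ x := (hasFDerivAt_inv hx).comp x hg.hasFDerivAt
  simp only [div_eq_mul_inv]
  rw [(hf.hasFDerivAt.fun_mul hinv).fderiv]
  simp only [add_apply, smul_apply, ContinuousLinearMap.comp_apply,
    ContinuousLinearMap.toSpanSingleton_apply, smul_eq_mul]
  field_simp
  ring

theorem fderiv_div_add_fderiv_div_eq_zero (hf : DifferentiableAt 𝕜 f x)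
    (hh : DifferentiableAt 𝕜 h x) (hg : DifferentiableAt 𝕜 g x) (hx : g x ≠ 0) {v w : E}
    (hnum : (fderiv 𝕜 f x v + fderiv 𝕜 h x w) * g x =
      f x * fderiv 𝕜 g x v + h x * fderiv 𝕜 g x w) :
    fderiv 𝕜 (fun y => f y / g y) x v + fderiv 𝕜 (fun y => h y / g y) x w = 0 := by
  rw [fderiv_div_apply hf hg hx, fderiv_div_apply hh hg hx, ← add_div, div_eq_zero_iff]
  left
  linear_combination hnum

theorem fderiv_mul_sub_sq_apply {Q S B : E → 𝕜} (hQ : DifferentiableAt 𝕜 Q x)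
    (hS : DifferentiableAt 𝕜 S x) (hB : DifferentiableAt 𝕜 B x) (v : E) :
    fderiv 𝕜 (fun y => Q y * B y - S y ^ 2) x v =
      B x * fderiv 𝕜 Q x v + Q x * fderiv 𝕜 B x v - 2 * S x * fderiv 𝕜 S x v := by
  rw [((hQ.hasFDerivAt.fun_mul hB.hasFDerivAt).fun_sub (hS.hasFDerivAt.pow 2)).fderiv]
  simp only [sub_apply, add_apply, smul_apply, smul_eq_mul, nsmul_eq_mul]
  ring

end

theorem stmt_14_general (U : Set (ℝ × ℝ))
    (Q S B : ℝ × ℝ → ℝ)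
    (hQ : ∀ p ∈ U, DifferentiableAt ℝ Q p)
    (hS : ∀ p ∈ U, DifferentiableAt ℝ S p)
    (hB : ∀ p ∈ U, DifferentiableAt ℝ B p)
    (D : ℝ × ℝ → ℝ) (hD : D = fun p => Q p * B p - (S p) ^ 2)
    (hD0 : ∀ p ∈ U, D p ≠ 0)
    (heqv1 : ∀ p ∈ U,
      S p * fderiv ℝ Q p (1, 0) + B p * fderiv ℝ Q p (0, 1) =
        Q p * fderiv ℝ S p (1, 0) + S p * fderiv ℝ S p (0, 1))
    (heqv2 : ∀ p ∈ U,
      S p * fderiv ℝ S p (1, 0) + B p * fderiv ℝ S p (0, 1) =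
        Q p * fderiv ℝ B p (1, 0) + S p * fderiv ℝ B p (0, 1)) :
    ∀ p ∈ U,
      fderiv ℝ (fun q => B q / D q) p (0, 1) +
        fderiv ℝ (fun q => S q / D q) p (1, 0) = 0 ∧
      fderiv ℝ (fun q => S q / D q) p (0, 1) +
        fderiv ℝ (fun q => Q q / D q) p (1, 0) = 0 := by
  intro p hp
  have hDp : D p = Q p * B p - S p ^ 2 := congrFun hD p
  have hDdiff : DifferentiableAt ℝ D p :=
    hD ▸ ((hQ p hp).mul (hB p hp)).sub ((hS p hp).pow 2)
  have hDderiv : ∀ v, fderiv ℝ D p v =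
      B p * fderiv ℝ Q p v + Q p * fderiv ℝ B p v - 2 * S p * fderiv ℝ S p v :=
    hD ▸ fderiv_mul_sub_sq_apply (hQ p hp) (hS p hp) (hB p hp)
  constructor
  · refine fderiv_div_add_fderiv_div_eq_zero (hB p hp) (hS p hp) hDdiff (hD0 p hp) ?_
    rw [hDderiv, hDderiv, hDp]
    linear_combination S p * heqv2 p hp - B p * heqv1 p hp
  · refine fderiv_div_add_fderiv_div_eq_zero (hS p hp) (hQ p hp) hDdiff (hD0 p hp) ?_
    rw [hDderiv, hDderiv, hDp]
    linear_combination Q p * heqv2 p hp - S p * heqv1 p hp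

/-- Claim (d) of Section 4 of the paper: the integrability system (eqv)
implies closedness of the 1-forms D⁻¹(B dϑ − S dλ) and D⁻¹(S dϑ − Q dλ),
i.e. the vanishing of (B/D)_λ + (S/D)_ϑ and (S/D)_λ + (Q/D)_ϑ. Partial
derivatives in the first coordinate (ϑ) and second coordinate (λ) are
encoded as `fderiv ℝ f p (1, 0)` and `fderiv ℝ f p (0, 1)`. -/
theorem stmt_14 (U : Set (ℝ × ℝ)) (hU : IsOpen U)
    (Q S B : ℝ × ℝ → ℝ)
    (hQ : ∀ p ∈ U, DifferentiableAt ℝ Q p)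
    (hS : ∀ p ∈ U, DifferentiableAt ℝ S p)
    (hB : ∀ p ∈ U, DifferentiableAt ℝ B p)
    (D : ℝ × ℝ → ℝ) (hD : D = fun p => Q p * B p - (S p) ^ 2)
    (hD0 : ∀ p ∈ U, D p ≠ 0)
    (heqv1 : ∀ p ∈ U,
      S p * fderiv ℝ Q p (1, 0) + B p * fderiv ℝ Q p (0, 1) =
        Q p * fderiv ℝ S p (1, 0) + S p * fderiv ℝ S p (0, 1))
    (heqv2 : ∀ p ∈ U,
      S p * fderiv ℝ S p (1, 0) + B p * fderiv ℝ S p (0, 1) =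
        Q p * fderiv ℝ B p (1, 0) + S p * fderiv ℝ B p (0, 1)) :
    ∀ p ∈ U,
      fderiv ℝ (fun q => B q / D q) p (0, 1) +
        fderiv ℝ (fun q => S q / D q) p (1, 0) = 0 ∧
      fderiv ℝ (fun q => S q / D q) p (0, 1) +
        fderiv ℝ (fun q => Q q / D q) p (1, 0) = 0 :=
  stmt_14_general U Q S B hQ hS hB D hD hD0 heqv1 heqv2
end

section
/- Let U ⊆ ℝ² be open and let Q, S, B : U → ℝ be differentiable functions satisfying S·Q_ϑ + B·Q_λ = Q·S_ϑ + S·S_λ and S·S_ϑ + B·S_λ = Q·B_ϑ + S·B_λ at every point of U, where f_ϑ and f_λ denote the partial derivatives of f with respect to the first and second coordinate. Set Π = Q·B − S². Then Q·Π_ϑ + S·Π_λ = (Q_ϑ + S_λ)·Π and S·Π_ϑ + B·Π_λ = (S_ϑ + B_λ)·Π at every point of U. -/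
/-- Claim (f) of Section 4 of the paper: under the integrability system
(eqv), the derivatives of Π = QB − S² (denoted `P` below) along the vector
fields Q∂_ϑ + S∂_λ and S∂_ϑ + B∂_λ are (Q_ϑ + S_λ)Π and (S_ϑ + B_λ)Π.
Partial derivatives in the first coordinate (ϑ) and second coordinate (λ)
are encoded as `fderiv ℝ f p (1, 0)` and `fderiv ℝ f p (0, 1)`. -/
theorem stmt_15 (U : Set (ℝ × ℝ)) (hU : IsOpen U)
    (Q S B : ℝ × ℝ → ℝ)
    (hQ : ∀ p ∈ U, DifferentiableAt ℝ Q p)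
    (hS : ∀ p ∈ U, DifferentiableAt ℝ S p)
    (hB : ∀ p ∈ U, DifferentiableAt ℝ B p)
    (heqv1 : ∀ p ∈ U,
      S p * fderiv ℝ Q p (1, 0) + B p * fderiv ℝ Q p (0, 1) =
        Q p * fderiv ℝ S p (1, 0) + S p * fderiv ℝ S p (0, 1))
    (heqv2 : ∀ p ∈ U,
      S p * fderiv ℝ S p (1, 0) + B p * fderiv ℝ S p (0, 1) =
        Q p * fderiv ℝ B p (1, 0) + S p * fderiv ℝ B p (0, 1))
    (P : ℝ × ℝ → ℝ) (hP : P = fun p => Q p * B p - (S p) ^ 2) :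
    ∀ p ∈ U,
      Q p * fderiv ℝ P p (1, 0) + S p * fderiv ℝ P p (0, 1) =
        (fderiv ℝ Q p (1, 0) + fderiv ℝ S p (0, 1)) * P p ∧
      S p * fderiv ℝ P p (1, 0) + B p * fderiv ℝ P p (0, 1) =
        (fderiv ℝ S p (1, 0) + fderiv ℝ B p (0, 1)) * P p := by
  intro p hp
  have hq := hQ p hp
  have hs := hS p hp
  have hb := hB p hp
  have hd : HasFDerivAt P
      ((Q p • fderiv ℝ B p + B p • fderiv ℝ Q p) -
        (S p • fderiv ℝ S p + S p • fderiv ℝ S p)) p := by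
    rw [hP]
    simp only [pow_two]
    exact (hq.hasFDerivAt.mul hb.hasFDerivAt).sub (hs.hasFDerivAt.mul hs.hasFDerivAt)
  have hPd : ∀ v : ℝ × ℝ, fderiv ℝ P p v =
      Q p * fderiv ℝ B p v + B p * fderiv ℝ Q p v - 2 * S p * fderiv ℝ S p v := by
    intro v
    rw [hd.fderiv]
    simp
    ring
  rw [hPd, hPd, hP]
  constructor
  · linear_combination S p * heqv1 p hp - Q p * heqv2 p hp
  · linear_combination B p * heqv1 p hp - S p * heqv2 p hp
end

section
/- There exists a function Σ : ℝ → ℝ which is real-analytic on the interval (−π²/4, +∞) and satisfies: Σ(0) = 1; Σ(y²) = tanh(y)/y for every real y ≠ 0; and Σ(−y²) = tan(y)/y for every real y with 0 < |y| < π/2. -/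
open FormalMultilinearSeries Nat

noncomputable def Cc : ℕ → ℝ := fun n => 1 / (2*n)!
noncomputable def Sc : ℕ → ℝ := fun n => 1 / (2*n+1)!

lemma summable_aux (c : ℕ → ℝ) (hc : ∀ n, |c n| ≤ 1 / n !) (r : NNReal) :
    Summable fun n => ‖ofScalars ℝ c n‖ * (r : ℝ) ^ n := by
  refine Summable.of_nonneg_of_le (fun n => by positivity)
    ?_ (Real.summable_pow_div_factorial (r : ℝ))
  intro n
  rw [ofScalars_norm, Real.norm_eq_abs]
  calc |c n| * (r:ℝ) ^ n ≤ (1 / n !) * (r:ℝ) ^ n := by gcongr; exact hc n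
  _ = (r:ℝ) ^ n / n ! := by ring

lemma analytic_sum (c : ℕ → ℝ) (hc : ∀ n, |c n| ≤ 1 / n !) :
    AnalyticOnNhd ℝ (ofScalarsSum c : ℝ → ℝ) Set.univ := by
  intro x _
  have hr : (ofScalars ℝ c).radius = ⊤ :=
    radius_eq_top_of_summable_norm _ (summable_aux c hc)
  have h := (ofScalars ℝ c).hasFPowerSeriesOnBall (by rw [hr]; exact ENNReal.zero_lt_top)
  exact h.analyticAt_of_mem (by simp [hr])

lemma hcC : ∀ n, |Cc n| ≤ 1 / (n ! : ℝ) := by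
  intro n
  have h : (n ! : ℝ) ≤ (2*n)! := by
    exact_mod_cast Nat.factorial_le (by omega)
  rw [Cc, abs_of_nonneg (by positivity)]
  exact div_le_div_of_nonneg_left one_pos.le (by positivity) h

lemma hcS : ∀ n, |Sc n| ≤ 1 / (n ! : ℝ) := by
  intro n
  have h : (n ! : ℝ) ≤ (2*n+1)! := by
    exact_mod_cast Nat.factorial_le (by omega)
  rw [Sc, abs_of_nonneg (by positivity)]
  exact div_le_div_of_nonneg_left one_pos.le (by positivity) h

lemma C_sq (y : ℝ) : ofScalarsSum Cc (y ^ 2) = Real.cosh y := by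
  rw [ofScalars_sum_eq]
  have h : ∀ n : ℕ, Cc n • (y^2)^n = y^(2*n) / (2*n)! := by
    intro n
    rw [Cc, smul_eq_mul, ← pow_mul]
    ring
  simp_rw [h]
  exact (Real.hasSum_cosh y).tsum_eq

lemma C_negsq (y : ℝ) : ofScalarsSum Cc (-(y ^ 2)) = Real.cos y := by
  rw [ofScalars_sum_eq]
  have h : ∀ n : ℕ, Cc n • (-(y^2))^n = (-1)^n * y^(2*n) / (2*n)! := by
    intro n
    rw [Cc, smul_eq_mul, neg_pow, ← pow_mul]
    ring
  simp_rw [h]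
  exact (Real.hasSum_cos y).tsum_eq

lemma S_sq (y : ℝ) (hy : y ≠ 0) : ofScalarsSum Sc (y ^ 2) = Real.sinh y / y := by
  rw [ofScalars_sum_eq]
  have h : ∀ n : ℕ, Sc n • (y^2)^n = (y^(2*n+1) / (2*n+1)!) / y := by
    intro n
    rw [Sc, smul_eq_mul, ← pow_mul, pow_succ]
    field_simp
  simp_rw [h]
  exact ((Real.hasSum_sinh y).div_const y).tsum_eq

lemma S_negsq (y : ℝ) (hy : y ≠ 0) : ofScalarsSum Sc (-(y ^ 2)) = Real.sin y / y := by
  rw [ofScalars_sum_eq]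
  have h : ∀ n : ℕ, Sc n • (-(y^2))^n = ((-1)^n * y^(2*n+1) / (2*n+1)!) / y := by
    intro n
    rw [Sc, smul_eq_mul, neg_pow, ← pow_mul, pow_succ]
    field_simp
  simp_rw [h]
  exact ((Real.hasSum_sin y).div_const y).tsum_eq

lemma C_pos {x : ℝ} (hx : x ∈ Set.Ioi (-(Real.pi ^ 2 / 4))) : 0 < ofScalarsSum Cc x := by
  rcases le_or_gt 0 x with h | h
  · have hx2 : x = (Real.sqrt x) ^ 2 := (Real.sq_sqrt h).symm
    rw [hx2, C_sq]
    exact Real.cosh_pos _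
  · have hx' : -x < Real.pi ^ 2 / 4 := by
      simp only [Set.mem_Ioi] at hx
      linarith
    have hs : Real.sqrt (-x) < Real.pi / 2 := by
      rw [show Real.pi / 2 = Real.sqrt ((Real.pi / 2) ^ 2) from
        (Real.sqrt_sq (by positivity)).symm]
      apply Real.sqrt_lt_sqrt (by linarith)
      nlinarith
    have hx2 : x = -(Real.sqrt (-x)) ^ 2 := by
      rw [Real.sq_sqrt (by linarith)]; ring
    rw [hx2, C_negsq]
    apply Real.cos_pos_of_mem_Ioo
    constructor
    · have := Real.sqrt_nonneg (-x); linarith [Real.pi_pos]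
    · exact hs

open Real in
/-- The analytic-continuation construction of Section 11 of the paper:
a function Σ (denoted `Sig`), real-analytic on (−π²/4, ∞), with Σ(0) = 1,
Σ(y²) = tanh(y)/y for y ≠ 0, and Σ(−y²) = tan(y)/y for 0 < |y| < π/2. -/
theorem stmt_16 :
    ∃ Sig : ℝ → ℝ,
      AnalyticOnNhd ℝ Sig (Set.Ioi (-(Real.pi ^ 2 / 4))) ∧
      Sig 0 = 1 ∧
      (∀ y : ℝ, y ≠ 0 → Sig (y ^ 2) = Real.tanh y / y) ∧
      (∀ y : ℝ, 0 < |y| → |y| < Real.pi / 2 → Sig (-(y ^ 2)) = Real.tan y / y) := by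
  refine ⟨fun x => ofScalarsSum Sc x / ofScalarsSum Cc x, ?_, ?_, ?_, ?_⟩
  · intro x hx
    exact (analytic_sum Sc hcS x trivial).div (analytic_sum Cc hcC x trivial)
      (C_pos hx).ne'
  · show ofScalarsSum Sc 0 / ofScalarsSum Cc 0 = 1
    rw [ofScalarsSum_zero, ofScalarsSum_zero]
    norm_num [Sc, Cc]
  · intro y hy
    show ofScalarsSum Sc (y ^ 2) / ofScalarsSum Cc (y ^ 2) = _
    rw [S_sq y hy, C_sq, Real.tanh_eq_sinh_div_cosh, div_div, div_div, mul_comm]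
  · intro y hy _
    have hy' : y ≠ 0 := by simpa [abs_pos] using hy
    show ofScalarsSum Sc (-(y ^ 2)) / ofScalarsSum Cc (-(y ^ 2)) = _
    rw [S_negsq y hy', C_negsq, Real.tan_eq_sin_div_cos, div_div, div_div, mul_comm]
end
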